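/- Let d ≥ 4 and let X = {V_1, …, V_N} be a family of N ≥ 2 pairwise distinct 2-dimensional linear subspaces of ℝ^d that is equi-chordal and is an equal-weight tight 2-fusion frame. Then N ≤ d(d+1)/2. Moreover, if N = d(d+1)/2, then ∑_{i,j=1}^N P'_{(2,2)}(V_i,V_j) = 0, so that X is a tight Grassmann 4-design on G_{2,d}. -/

import Mathlib

open scoped BigOperators

/-- Orthogonal projection onto a subspace `V` of `ℝ^d`, as a linear endomorphism. -/
noncomputable def proj {d : ℕ} (V : Submodule ℝ (EuclideanSpace ℝ (Fin d))) :
    EuclideanSpace ℝ (Fin d) →ₗ[ℝ] EuclideanSpace ℝ (Fin d) :=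
  V.subtype ∘ₗ (V.orthogonalProjectionOnto).toLinearMap

/-- `tr(P_V P_W)`. -/
noncomputable def trP {d : ℕ} (V W : Submodule ℝ (EuclideanSpace ℝ (Fin d))) : ℝ :=
  LinearMap.trace ℝ (EuclideanSpace ℝ (Fin d)) (proj V ∘ₗ proj W)

/-- `tr((P_V P_W)²)`. -/
noncomputable def trP2 {d : ℕ} (V W : Submodule ℝ (EuclideanSpace ℝ (Fin d))) : ℝ :=
  LinearMap.trace ℝ (EuclideanSpace ℝ (Fin d)) ((proj V ∘ₗ proj W) ∘ₗ (proj V ∘ₗ proj W))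

/-- `e₂(V,W) = ((tr(P_V P_W))² − tr((P_V P_W)²))/2`, the second elementary symmetric
function of the squared principal-angle cosines for 2-dimensional subspaces. -/
noncomputable def e2fun {d : ℕ} (V W : Submodule ℝ (EuclideanSpace ℝ (Fin d))) : ℝ :=
  ((trP V W) ^ 2 - trP2 V W) / 2

/-- Zonal polynomial `P_{(2)}` for `k = 2`, as a function of `e₁`. -/
noncomputable def P2d (d : ℕ) (e1 : ℝ) : ℝ :=
  (4 - (d : ℝ) * e1) / (2 * (2 - (d : ℝ)))

/-- Unnormalized zonal polynomial `P'_{(4)}` for `k = 2`, in the variables `(e₁, e₂)`. -/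
noncomputable def P4d (d : ℕ) (e1 e2 : ℝ) : ℝ :=
  1 - (((d : ℝ) + 2) / 2) * e1 + (3 * ((d : ℝ) + 2) * ((d : ℝ) + 4) / 64) * e1 ^ 2 -
    (((d : ℝ) + 2) * ((d : ℝ) + 4) / 16) * e2

/-- Unnormalized zonal polynomial `P'_{(2,2)}` for `k = 2`, in the variables `(e₁, e₂)`. -/
noncomputable def P22d (d : ℕ) (e1 e2 : ℝ) : ℝ :=
  1 - (((d : ℝ) - 1) / 2) * e1 + (((d : ℝ) - 1) * ((d : ℝ) - 2) / 2) * e2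

/-!
Polarizing the quartic identity `∑ᵢ ⟪Pᵢ x, x⟫² = A ‖x‖⁴` once and contracting it against an
orthonormal basis gives the two moment identities of a tight fusion frame of rank-`k` projections:
`(k + 2) ∑ᵢ Pᵢ = A (d + 2) · 1` and `∑ᵢ (tr(PᵢQ)² + 2 tr((PᵢQ)²)) = A k (k + 2)` for every
rank-`k` orthogonal projection `Q`. With `Q = Pⱼ` and `k = 2` they fix `∑ e₁` and `∑ (3e₁² − 4e₂)`
over all pairs, which already makes the sums of `P_{(2)}` and `P'_{(4)}` vanish.

Equi-chordality makes the Gram matrix of the `Pᵢ` for the trace form equal to `(2 − c) I + c J`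
with `0 ≤ c < 2`, so the `Pᵢ` are linearly independent in the space of symmetric operators, of
dimension `d (d + 1) / 2`. When `N = d (d + 1) / 2`, the first moment identity forces
`c = 4d / ((d + 2)(d − 1))`, and with this value the sum of `P'_{(2,2)}` vanishes as well.
-/

open scoped RealInnerProductSpace
open LinearMap (trace)

section Polarization
variable {E : Type*} [NormedAddCommGroup E] [InnerProductSpace ℝ E]

/-- Three times the polarization of the quartic form `x ↦ ⟪T x, x⟫²` at `(x, x, y, y)`. -/
def polarQuartic (T : E →ₗ[ℝ] E) (x y : E) : ℝ :=
  ⟪T x, x⟫ * ⟪T y, y⟫ + 2 * ⟪T x, y⟫ ^ 2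

lemma LinearMap.IsSymmetric.four_mul_polarQuartic {T : E →ₗ[ℝ] E} (hT : T.IsSymmetric)
    (x y : E) :
    4 * polarQuartic T x y = ⟪T (x + y), x + y⟫ ^ 2 + ⟪T (x - y), x - y⟫ ^ 2
      - 2 * ⟪T x, x⟫ ^ 2 - 2 * ⟪T y, y⟫ ^ 2 := by
  have hyx : ⟪T y, x⟫ = ⟪T x, y⟫ := by rw [hT, real_inner_comm]
  simp only [polarQuartic, map_add, map_sub, inner_add_left, inner_add_right, inner_sub_left,
    inner_sub_right, hyx]
  ring

lemma sum_polarQuartic_eq {ι : Type*} [Fintype ι] {T : ι → E →ₗ[ℝ] E}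
    (hT : ∀ i, (T i).IsSymmetric) {A : ℝ} (h : ∀ x, ∑ i, ⟪T i x, x⟫ ^ 2 = A * ⟪x, x⟫ ^ 2)
    (x y : E) : ∑ i, polarQuartic (T i) x y = A * polarQuartic 1 x y := by
  have hone : (1 : E →ₗ[ℝ] E).IsSymmetric := LinearMap.IsSymmetric.id
  refine mul_left_cancel₀ (four_ne_zero (α := ℝ)) ?_
  rw [Finset.mul_sum, mul_left_comm, hone.four_mul_polarQuartic]
  simp only [(hT _).four_mul_polarQuartic, Finset.sum_sub_distrib, Finset.sum_add_distrib,
    ← Finset.mul_sum, h, Module.End.one_apply]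
  ring

lemma LinearMap.IsSymmetricProjection.inner_apply_self {P : E →ₗ[ℝ] E}
    (hP : P.IsSymmetricProjection) (x : E) : ⟪P x, x⟫ = ‖P x‖ ^ 2 := by
  conv_lhs => rw [← hP.isIdempotentElem.eq]
  rw [Module.End.mul_apply, hP.isSymmetric, real_inner_self_eq_norm_sq]

end Polarization

section Contraction
variable {E κ : Type*} [NormedAddCommGroup E] [InnerProductSpace ℝ E] [Fintype κ]
  (e : OrthonormalBasis κ ℝ E)

lemma sum_polarQuartic_basis (T : E →ₗ[ℝ] E) (x : E) :
    ∑ a, polarQuartic T x (e a) = trace ℝ E T * ⟪T x, x⟫ + 2 * ‖T x‖ ^ 2 := by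
  simp only [polarQuartic, Finset.sum_add_distrib, ← Finset.mul_sum, e.sum_sq_inner_right,
    LinearMap.trace_eq_sum_inner T e, real_inner_comm (e _)]
  ring

lemma LinearMap.IsSymmetricProjection.trace_mul_eq_sum_inner {P : E →ₗ[ℝ] E}
    (hP : P.IsSymmetricProjection) (T : E →ₗ[ℝ] E) :
    trace ℝ E (T * P) = ∑ a, ⟪T (P (e a)), P (e a)⟫ := by
  conv_lhs => rw [← hP.isIdempotentElem.eq, ← mul_assoc, LinearMap.trace_mul_comm]
  simp only [LinearMap.trace_eq_sum_inner _ e, Module.End.mul_apply, ← hP.isSymmetric _ (T _),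
    real_inner_comm]

lemma LinearMap.IsSymmetric.trace_mul_self {M : E →ₗ[ℝ] E} (hM : M.IsSymmetric) :
    trace ℝ E (M * M) = ∑ a, ‖M (e a)‖ ^ 2 := by
  simp only [LinearMap.trace_eq_sum_inner _ e, Module.End.mul_apply, ← hM _ (M _),
    real_inner_self_eq_norm_sq]

lemma LinearMap.IsSymmetricProjection.sum_sum_polarQuartic {P T : E →ₗ[ℝ] E}
    (hP : P.IsSymmetricProjection) (hT : T.IsSymmetric) :
    ∑ a, ∑ b, polarQuartic T (P (e a)) (P (e b))
      = trace ℝ E (T * P) ^ 2 + 2 * trace ℝ E (T * P * (T * P)) := by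
  set M := P * T * P
  have hM : M.IsSymmetric := fun x y => by
    simp only [M, Module.End.mul_apply, hP.isSymmetric _ y, hT _ (P y), hP.isSymmetric x]
  have hMe : ∀ a b, ⟪T (P (e a)), P (e b)⟫ = ⟪M (e a), e b⟫ := fun a b =>
    (hP.isSymmetric _ _).symm
  have hMM : trace ℝ E (M * M) = trace ℝ E (T * P * (T * P)) := by
    rw [show M * M = P * (T * P * P * T * P) by simp only [M, mul_assoc], LinearMap.trace_mul_comm]
    simp only [mul_assoc, hP.isIdempotentElem.eq]
  simp only [polarQuartic, Finset.sum_add_distrib, ← Finset.mul_sum, ← Finset.sum_mul]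
  rw [← hP.trace_mul_eq_sum_inner e, ← hMM, hM.trace_mul_self e]
  simp only [hMe, e.sum_sq_inner_left]
  ring

end Contraction

section TightFusionFrame
variable {E ι : Type*} [NormedAddCommGroup E] [InnerProductSpace ℝ E] [FiniteDimensional ℝ E]
  [Fintype ι] {P : ι → E →ₗ[ℝ] E} {k : ℕ} {A : ℝ}
  (hP : ∀ i, (P i).IsSymmetricProjection) (htr : ∀ i, trace ℝ E (P i) = k)
  (h : ∀ x, ∑ i, ⟪P i x, x⟫ ^ 2 = A * ⟪x, x⟫ ^ 2)
include hP htr h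

theorem smul_sum_eq_smul_one_of_sum_inner_sq :
    ((k : ℝ) + 2) • ∑ i, P i = (A * (Module.finrank ℝ E + 2)) • 1 := by
  let e := stdOrthonormalBasis ℝ E
  have hsym : (((k : ℝ) + 2) • ∑ i, P i - (A * (Module.finrank ℝ E + 2)) • 1).IsSymmetric :=
    ((LinearMap.isSymmetric_sum _ fun i _ => (hP i).isSymmetric).smul rfl).sub
      (LinearMap.IsSymmetric.id.smul rfl)
  rw [← sub_eq_zero, ← hsym.inner_map_self_eq_zero]
  intro x
  have key : ∑ a, ∑ i, polarQuartic (P i) x (e a) = ∑ a, A * polarQuartic 1 x (e a) :=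
    Finset.sum_congr rfl fun a _ => sum_polarQuartic_eq (fun i => (hP i).isSymmetric) h x (e a)
  rw [Finset.sum_comm, ← Finset.mul_sum] at key
  simp only [sum_polarQuartic_basis, htr, LinearMap.trace_one, ← (hP _).inner_apply_self,
    Module.End.one_apply, ← real_inner_self_eq_norm_sq, Finset.sum_add_distrib,
    ← Finset.mul_sum] at key
  simp only [LinearMap.sub_apply, LinearMap.smul_apply, LinearMap.sum_apply, Module.End.one_apply,
    inner_sub_left, real_inner_smul_left, sum_inner]
  linarith

theorem add_two_mul_mul_card_eq :
    ((k : ℝ) + 2) * (k * Fintype.card ι) = A * (Module.finrank ℝ E + 2) * Module.finrank ℝ E := by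
  have h1 := congrArg (trace ℝ E) (smul_sum_eq_smul_one_of_sum_inner_sq hP htr h)
  simpa [map_sum, htr, mul_comm] using h1

theorem finrank_mul_sum_sum_trace_mul :
    (Module.finrank ℝ E : ℝ) * ∑ i, ∑ j, trace ℝ E (P i * P j) = (k * Fintype.card ι) ^ 2 := by
  have hsq := congrArg (fun T => trace ℝ E (T * T))
    (smul_sum_eq_smul_one_of_sum_inner_sq hP htr h)
  simp only [smul_mul_smul_comm, one_mul, map_smul, LinearMap.trace_one, Finset.sum_mul_sum,
    map_sum, smul_eq_mul] at hsq
  apply mul_left_cancel₀ (by positivity : ((k : ℝ) + 2) ^ 2 ≠ 0)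
  linear_combination (Module.finrank ℝ E : ℝ) * hsq - (((k : ℝ) + 2) * k * Fintype.card ι
    + A * (Module.finrank ℝ E + 2) * Module.finrank ℝ E) * add_two_mul_mul_card_eq hP htr h

theorem finrank_mul_sum_sum_trace_mul_sq_add :
    (Module.finrank ℝ E : ℝ) * (Module.finrank ℝ E + 2) * ∑ i, ∑ j,
      (trace ℝ E (P i * P j) ^ 2 + 2 * trace ℝ E (P i * P j * (P i * P j)))
      = (k * (k + 2) * Fintype.card ι) ^ 2 := by
  let e := stdOrthonormalBasis ℝ E
  have hone : (1 : E →ₗ[ℝ] E).IsSymmetric := LinearMap.IsSymmetric.id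
  have hcol : ∀ j, ∑ i, (trace ℝ E (P i * P j) ^ 2 + 2 * trace ℝ E (P i * P j * (P i * P j)))
      = A * (k * (k + 2)) := fun j => calc
    _ = ∑ i, ∑ a, ∑ b, polarQuartic (P i) (P j (e a)) (P j (e b)) := by
      simp only [(hP j).sum_sum_polarQuartic e (hP _).isSymmetric]
    _ = ∑ a, ∑ b, A * polarQuartic 1 (P j (e a)) (P j (e b)) := by
      rw [Finset.sum_comm]
      refine Finset.sum_congr rfl fun a _ => ?_
      rw [Finset.sum_comm]
      exact Finset.sum_congr rfl fun b _ =>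
        sum_polarQuartic_eq (fun i => (hP i).isSymmetric) h _ _
    _ = A * (k * (k + 2)) := by
      simp only [← Finset.mul_sum, (hP j).sum_sum_polarQuartic e hone, one_mul,
        (hP j).isIdempotentElem.eq, htr]
      ring
  rw [Finset.sum_comm, Finset.sum_congr rfl fun j _ => hcol j, Finset.sum_const,
    Finset.card_univ, nsmul_eq_mul]
  linear_combination (-(Fintype.card ι * k * (k + 2) : ℝ)) * add_two_mul_mul_card_eq hP htr h

end TightFusionFrame

section Independence
variable {E : Type*} [NormedAddCommGroup E] [InnerProductSpace ℝ E] [FiniteDimensional ℝ E]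

lemma linearIndependent_of_bilinForm_eq {M ι : Type*} [AddCommGroup M] [Module ℝ M] [Fintype ι]
    (B : LinearMap.BilinForm ℝ M) {v : ι → M} {a c : ℝ} (hc : 0 ≤ c) (hca : c < a)
    (hdiag : ∀ i, B (v i) (v i) = a) (hoff : ∀ i j, i ≠ j → B (v i) (v j) = c) :
    LinearIndependent ℝ v := by
  classical
  rw [Fintype.linearIndependent_iff]
  intro g hg
  have hcol : ∀ i, ∑ j, g j * B (v j) (v i) = c * ∑ j, g j + (a - c) * g i := by
    intro i
    rw [← Finset.add_sum_erase _ _ (Finset.mem_univ i),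
      ← Finset.add_sum_erase _ _ (Finset.mem_univ i), hdiag,
      Finset.sum_congr rfl fun j hj => by rw [hoff j i (Finset.ne_of_mem_erase hj)],
      ← Finset.sum_mul]
    ring
  have h0 : (a - c) * ∑ i, g i ^ 2 + c * (∑ i, g i) ^ 2 = 0 := by
    have hZ := congrArg (fun z => B z z) hg
    simp only [map_sum, map_smul, LinearMap.sum_apply, LinearMap.smul_apply, smul_eq_mul, hcol,
      map_zero, mul_add, Finset.sum_add_distrib, ← Finset.sum_mul] at hZ
    have hdiag_sum : ∑ i, g i * ((a - c) * g i) = (a - c) * ∑ i, g i ^ 2 := by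
      rw [Finset.mul_sum]; exact Finset.sum_congr rfl fun i _ => by ring
    linear_combination hZ - hdiag_sum
  have hsq : ∑ i, g i ^ 2 = 0 := by
    have := Finset.sum_nonneg fun i (_ : i ∈ Finset.univ) => sq_nonneg (g i)
    nlinarith [sq_nonneg (∑ i, g i)]
  intro i
  exact pow_eq_zero_iff two_ne_zero |>.mp <|
    (Finset.sum_eq_zero_iff_of_nonneg fun i _ => sq_nonneg (g i)).mp hsq i (Finset.mem_univ i)

lemma card_le_choose_of_linearIndependent {ι : Type*} [Fintype ι] {T : ι → E →ₗ[ℝ] E}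
    (hT : ∀ i, (T i).IsSymmetric) (hli : LinearIndependent ℝ T) :
    Fintype.card ι ≤ (Module.finrank ℝ E + 1).choose 2 := by
  let e := stdOrthonormalBasis ℝ E
  -- the matrix entries of a symmetric operator, indexed by unordered pairs of basis vectors
  let φ : ι → Sym2 (Fin (Module.finrank ℝ E)) → ℝ := fun i =>
    Sym2.lift ⟨fun a b => ⟪T i (e a), e b⟫, fun a b => by dsimp only; rw [hT, real_inner_comm]⟩
  have hφ : LinearIndependent ℝ φ := by
    rw [Fintype.linearIndependent_iff] at hli ⊢
    refine fun g hg => hli g (e.toBasis.ext fun a =>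
      InnerProductSpace.ext_inner_right_basis e.toBasis fun b => ?_)
    simpa [φ, Finset.sum_apply, sum_inner, real_inner_smul_left] using congrFun hg s(a, b)
  simpa [Module.finrank_fintype_fun_eq_card, Sym2.card] using hφ.fintype_card_le_finrank

variable {P Q : E →ₗ[ℝ] E}

lemma LinearMap.IsSymmetricProjection.trace_mul_nonneg (hP : P.IsSymmetricProjection)
    (hQ : Q.IsSymmetricProjection) : 0 ≤ trace ℝ E (P * Q) := by
  rw [hQ.trace_mul_eq_sum_inner (stdOrthonormalBasis ℝ E)]
  exact Finset.sum_nonneg fun a _ => hP.isPositive.inner_nonneg_left _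

lemma LinearMap.IsSymmetric.trace_mul_self_pos {M : E →ₗ[ℝ] E} (hM : M.IsSymmetric)
    (hne : M ≠ 0) : 0 < trace ℝ E (M * M) := by
  let e := stdOrthonormalBasis ℝ E
  obtain ⟨a, ha⟩ : ∃ a, M (e a) ≠ 0 := by
    by_contra! h
    exact hne (e.toBasis.ext fun a => by simpa using h a)
  rw [hM.trace_mul_self e]
  exact Finset.sum_pos' (fun _ _ => by positivity) ⟨a, Finset.mem_univ _, by positivity⟩

lemma LinearMap.IsSymmetricProjection.trace_mul_lt (hP : P.IsSymmetricProjection)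
    (hQ : Q.IsSymmetricProjection) {r : ℝ} (hPr : trace ℝ E P = r) (hQr : trace ℝ E Q = r)
    (hne : P ≠ Q) : trace ℝ E (P * Q) < r := by
  have hpos := (hP.isSymmetric.sub hQ.isSymmetric).trace_mul_self_pos (sub_ne_zero.mpr hne)
  rw [show (P - Q) * (P - Q) = P * P - P * Q - Q * P + Q * Q by noncomm_ring, map_add, map_sub,
    map_sub, hP.isIdempotentElem.eq, hQ.isIdempotentElem.eq, LinearMap.trace_mul_comm ℝ Q P]
    at hpos
  linarith

theorem card_le_choose_of_trace_mul_eq {ι : Type*} [Fintype ι] [Nontrivial ι]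
    {P : ι → E →ₗ[ℝ] E} (hP : ∀ i, (P i).IsSymmetricProjection) {r c : ℝ}
    (htr : ∀ i, trace ℝ E (P i) = r) (hinj : Function.Injective P)
    (hc : ∀ i j, i ≠ j → trace ℝ E (P i * P j) = c) :
    Fintype.card ι ≤ (Module.finrank ℝ E + 1).choose 2 := by
  obtain ⟨i, j, hij⟩ := exists_pair_ne ι
  refine card_le_choose_of_linearIndependent (fun i => (hP i).isSymmetric) <|
    linearIndependent_of_bilinForm_eq ((LinearMap.mul ℝ _).compr₂ (trace ℝ E))
      (hc i j hij ▸ (hP i).trace_mul_nonneg (hP j))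
      (hc i j hij ▸ (hP i).trace_mul_lt (hP j) (htr i) (htr j) (hinj.ne hij))
      (fun i => ?_) hc
  simp [(hP i).isIdempotentElem.eq, htr]

end Independence

section ZonalSums
variable {ι : Type*} [Fintype ι] {d : ℕ} {e1 e2 : ι → ι → ℝ}

lemma sum_sum_eq_of_diag_offDiag {f : ι → ι → ℝ} {v w : ℝ}
    (hdiag : ∀ i, f i i = v) (hoff : ∀ i j, i ≠ j → f i j = w) :
    ∑ i, ∑ j, f i j = Fintype.card ι * v + Fintype.card ι * (Fintype.card ι - 1) * w := by
  classical
  have hrow : ∀ i, ∑ j, f i j = v + (Fintype.card ι - 1) * w := by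
    intro i
    rw [← Finset.add_sum_erase _ _ (Finset.mem_univ i), hdiag,
      Finset.sum_congr rfl fun j hj => hoff i j (Finset.ne_of_mem_erase hj).symm,
      Finset.sum_const, Finset.card_erase_of_mem (Finset.mem_univ i), Finset.card_univ,
      nsmul_eq_mul, Nat.cast_pred (Fintype.card_pos_iff.mpr ⟨i⟩)]
  simp only [hrow, Finset.sum_const, Finset.card_univ, nsmul_eq_mul]
  ring

lemma sum_sum_P2d_eq_zero (h1 : (d : ℝ) * ∑ i, ∑ j, e1 i j = (2 * Fintype.card ι) ^ 2) :
    ∑ i, ∑ j, P2d d (e1 i j) = 0 := by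
  simp only [P2d, ← Finset.sum_div, Finset.sum_sub_distrib, ← Finset.mul_sum, Finset.sum_const,
    Finset.card_univ, nsmul_eq_mul]
  rw [h1]
  ring

lemma sum_sum_P4d_eq_zero (hd : d ≠ 0)
    (h1 : (d : ℝ) * ∑ i, ∑ j, e1 i j = (2 * Fintype.card ι) ^ 2)
    (h2 : (d : ℝ) * (d + 2) * ∑ i, ∑ j, (3 * e1 i j ^ 2 - 4 * e2 i j)
      = (8 * Fintype.card ι) ^ 2) :
    ∑ i, ∑ j, P4d d (e1 i j) (e2 i j) = 0 := by
  have hP4 : ∀ x y, P4d d x y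
      = 1 - ((d : ℝ) + 2) / 2 * x + ((d : ℝ) + 2) * (d + 4) / 64 * (3 * x ^ 2 - 4 * y) :=
    fun x y => by unfold P4d; ring
  simp only [hP4, Finset.sum_add_distrib, Finset.sum_sub_distrib, ← Finset.mul_sum,
    Finset.sum_const, Finset.card_univ, nsmul_eq_mul] at h2 ⊢
  apply mul_left_cancel₀ (Nat.cast_ne_zero.mpr hd : (d : ℝ) ≠ 0)
  linear_combination (-((d : ℝ) + 2) / 2) * h1 + ((d : ℝ) + 4) / 64 * h2

lemma offDiag_eq_of_two_mul_card_eq {c : ℝ} (hd : 2 ≤ d) (hN : 2 * Fintype.card ι = d * (d + 1))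
    (hdiag : ∀ i, e1 i i = 2) (hoff : ∀ i j, i ≠ j → e1 i j = c)
    (h1 : (d : ℝ) * ∑ i, ∑ j, e1 i j = (2 * Fintype.card ι) ^ 2) :
    c = 4 * d / ((d + 2) * (d - 1)) := by
  have hS1 := sum_sum_eq_of_diag_offDiag hdiag hoff
  have hNr : (Fintype.card ι : ℝ) = d * (d + 1) / 2 := by
    rw [eq_div_iff two_ne_zero, mul_comm]; exact_mod_cast hN
  have hdr : (2 : ℝ) ≤ d := by exact_mod_cast hd
  rw [hNr] at h1 hS1
  rw [eq_div_iff (by nlinarith)]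
  apply mul_left_cancel₀ (show (d : ℝ) ^ 2 * (d + 1) / 4 ≠ 0 by positivity)
  linear_combination h1 - (d : ℝ) * hS1

lemma sum_sum_P22d_eq_zero {c : ℝ} (hd : 2 ≤ d) (hN : 2 * Fintype.card ι = d * (d + 1))
    (hdiag : ∀ i, e1 i i = 2) (hoff : ∀ i j, i ≠ j → e1 i j = c)
    (h1 : (d : ℝ) * ∑ i, ∑ j, e1 i j = (2 * Fintype.card ι) ^ 2)
    (h2 : (d : ℝ) * (d + 2) * ∑ i, ∑ j, (3 * e1 i j ^ 2 - 4 * e2 i j)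
      = (8 * Fintype.card ι) ^ 2) :
    ∑ i, ∑ j, P22d d (e1 i j) (e2 i j) = 0 := by
  have hc := offDiag_eq_of_two_mul_card_eq hd hN hdiag hoff h1
  have hS2 := sum_sum_eq_of_diag_offDiag (f := fun i j => e1 i j ^ 2) (v := 2 ^ 2) (w := c ^ 2)
    (fun i => by rw [hdiag]) (fun i j hij => by rw [hoff i j hij])
  have hNr : (Fintype.card ι : ℝ) = d * (d + 1) / 2 := by
    rw [eq_div_iff two_ne_zero, mul_comm]; exact_mod_cast hN
  have hdr : (2 : ℝ) ≤ d := by exact_mod_cast hd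
  have hd1 : (d : ℝ) - 1 ≠ 0 := by linarith
  simp only [Finset.sum_sub_distrib, ← Finset.mul_sum] at h2
  rw [hNr] at h1 h2 hS2
  have hS1 : ∑ i, ∑ j, e1 i j = d * (d + 1) ^ 2 := by
    apply mul_left_cancel₀ (show (d : ℝ) ≠ 0 by positivity)
    linear_combination h1
  have hSe2 : ∑ i, ∑ j, e2 i j
      = (3 * ∑ i, ∑ j, e1 i j ^ 2 - 16 * d * (d + 1) ^ 2 / (d + 2)) / 4 := by
    have hX : 3 * ∑ i, ∑ j, e1 i j ^ 2 - 4 * ∑ i, ∑ j, e2 i j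
        = 16 * d * (d + 1) ^ 2 / (d + 2) := by
      rw [eq_div_iff (by positivity)]
      apply mul_left_cancel₀ (show (d : ℝ) ≠ 0 by positivity)
      linear_combination h2
    linear_combination (-1 / 4 : ℝ) * hX
  simp only [P22d, Finset.sum_add_distrib, Finset.sum_sub_distrib, ← Finset.mul_sum,
    Finset.sum_const, Finset.card_univ, nsmul_eq_mul]
  rw [hSe2, hS1, hS2, hNr, hc]
  field_simp
  ring

end ZonalSums

section Proj
variable {d : ℕ}

lemma isSymmetricProjection_proj (V : Submodule ℝ (EuclideanSpace ℝ (Fin d))) :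
    (proj V).IsSymmetricProjection :=
  V.isSymmetricProjection_starProjection

lemma trace_proj (V : Submodule ℝ (EuclideanSpace ℝ (Fin d))) :
    trace ℝ _ (proj V) = Module.finrank ℝ V := by
  have hrange : LinearMap.range (proj V) = V := V.range_starProjection
  have hidem := (isSymmetricProjection_proj V).isIdempotentElem
  rw [(LinearMap.IsIdempotentElem.isProj_range _ hidem).trace, hrange]

lemma proj_injective : Function.Injective (proj (d := d)) := fun _ _ h =>
  Submodule.starProjection_inj.mp (ContinuousLinearMap.coe_injective h)

lemma trP_eq_trace_mul (V W : Submodule ℝ (EuclideanSpace ℝ (Fin d))) :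
    trP V W = trace ℝ _ (proj V * proj W) :=
  rfl

lemma trP2_eq_trace_mul (V W : Submodule ℝ (EuclideanSpace ℝ (Fin d))) :
    trP2 V W = trace ℝ _ (proj V * proj W * (proj V * proj W)) :=
  rfl

lemma three_mul_trP_sq_sub_four_mul_e2fun (V W : Submodule ℝ (EuclideanSpace ℝ (Fin d))) :
    3 * trP V W ^ 2 - 4 * e2fun V W = trP V W ^ 2 + 2 * trP2 V W := by
  unfold e2fun
  ring

end Proj

/-- an `ECTFF₂` on `G_{2,d}` (`d ≥ 4`, `N ≥ 2` pairwise distinct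
2-dimensional subspaces, equi-chordal and an equal-weight tight 2-fusion frame)
satisfies `N ≤ d(d+1)/2`; moreover if `N = d(d+1)/2` then
`∑_{i,j} P'_{(2,2)}(V_i, V_j) = 0` (and the sums of `P_{(2)}` and `P'_{(4)}` vanish
as well), so that `X` is a tight Grassmann 4-design on `G_{2,d}`. -/
theorem stmt18 (d N : ℕ) (hd : 4 ≤ d) (hN : 2 ≤ N)
    (V : Fin N → Submodule ℝ (EuclideanSpace ℝ (Fin d)))
    (hinj : Function.Injective V)
    (hdim : ∀ i, Module.finrank ℝ (V i) = 2)
    (hec : ∃ c : ℝ, ∀ i j, i ≠ j → trP (V i) (V j) = c)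
    (htff : ∃ A : ℝ, 0 < A ∧ ∀ x : EuclideanSpace ℝ (Fin d),
      ∑ i, ‖proj (V i) x‖ ^ 4 = A * ‖x‖ ^ 4) :
    2 * N ≤ d * (d + 1) ∧
    (2 * N = d * (d + 1) →
      (∑ i, ∑ j, P2d d (trP (V i) (V j))) = 0 ∧
      (∑ i, ∑ j, P4d d (trP (V i) (V j)) (e2fun (V i) (V j))) = 0 ∧
      (∑ i, ∑ j, P22d d (trP (V i) (V j)) (e2fun (V i) (V j))) = 0) := by
  obtain ⟨c, hc⟩ := hec
  obtain ⟨A, -, htff⟩ := htff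
  have hP i := isSymmetricProjection_proj (V i)
  have htr i : trace ℝ _ (proj (V i)) = (2 : ℕ) := by rw [trace_proj, hdim]
  have hquart x : ∑ i, ⟪proj (V i) x, x⟫ ^ 2 = A * ⟪x, x⟫ ^ 2 := by
    simpa only [(hP _).inner_apply_self, real_inner_self_eq_norm_sq, ← pow_mul] using htff x
  have : Nontrivial (Fin N) := Fin.nontrivial_iff_two_le.mpr hN
  have hbound := card_le_choose_of_trace_mul_eq hP htr (proj_injective.comp hinj) hc
  have h1 : (d : ℝ) * ∑ i, ∑ j, trP (V i) (V j) = (2 * Fintype.card (Fin N)) ^ 2 := by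
    simpa [trP_eq_trace_mul] using finrank_mul_sum_sum_trace_mul hP htr hquart
  have h2 : (d : ℝ) * (d + 2) * ∑ i, ∑ j, (3 * trP (V i) (V j) ^ 2 - 4 * e2fun (V i) (V j))
      = (8 * Fintype.card (Fin N)) ^ 2 := by
    simp only [three_mul_trP_sq_sub_four_mul_e2fun]
    simp only [trP_eq_trace_mul, trP2_eq_trace_mul]
    convert finrank_mul_sum_sum_trace_mul_sq_add hP htr hquart using 2 <;> norm_num
  have hdiag i : trP (V i) (V i) = 2 := by
    simpa [trP_eq_trace_mul, (hP i).isIdempotentElem.eq] using htr i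
  rw [Fintype.card_fin, finrank_euclideanSpace_fin] at hbound
  refine ⟨?_, fun heq => ⟨sum_sum_P2d_eq_zero h1, sum_sum_P4d_eq_zero (by omega) h1 h2,
    sum_sum_P22d_eq_zero (by omega) (by simpa using heq) hdiag hc h1 h2⟩⟩
  calc 2 * N ≤ (d + 1).choose 2 * 2 := by omega
    _ = d * (d + 1) := by rw [← Nat.add_one_mul_choose_eq, Nat.choose_one_right, mul_comm]
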